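/- arXiv:1808.01394 — 2 statements merged into one kernel-verified Lean document; each statement's English description precedes it below -/
import Mathlib

section
/- For every n ∈ ℕ, every δ ∈ (0,1), and every subset H ⊆ [n] with |H| > 8·ln(4/δ), the mechanism C_H is (ε, δ/2)-differentially private with ε = ln(1 + √(32·ln(4/δ)/|H|)): for all x, x' ∈ {0,1}^n differing in at most one coordinate and every set W ⊆ {0,1,…,n}, Pr[C_H(x) ∈ W] ≤ (1 + √(32·ln(4/δ)/|H|)) · Pr[C_H(x') ∈ W] + δ/2. -/
open scoped ENNReal Classical

noncomputable section

namespace ShuffledDP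

universe u v w

lemma half_le_one : (2⁻¹ : ℝ≥0∞) ≤ 1 := by
  simp [ENNReal.inv_le_one]

/-- Independent samples from a finite family of PMFs, collected (in order) as a list. -/
noncomputable def indep {α : Type u} : (n : ℕ) → (Fin n → PMF α) → PMF (List α)
  | 0, _ => PMF.pure []
  | n + 1, f =>
      (f 0).bind fun y => (indep n fun i => f i.succ).bind fun ys => PMF.pure (y :: ys)

/-- `(ε, δ)`-differential privacy of a mechanism `M` with respect to a
neighboring relation `nbr` on inputs. -/
def DPFor {I : Type u} {Z : Type v} (nbr : I → I → Prop) (M : I → PMF Z) (ε δ : ℝ) : Prop :=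
  ∀ x x', nbr x x' → ∀ T : Set Z,
    (M x).toOuterMeasure T ≤
      ENNReal.ofReal (Real.exp ε) * (M x').toOuterMeasure T + ENNReal.ofReal δ

/-- Two datasets are neighbors if they differ in at most one coordinate. -/
def Neighbor {n : ℕ} {X : Type u} (x x' : Fin n → X) : Prop :=
  ∃ j, ∀ i, i ≠ j → x i = x' i

/-- The randomized-response local randomizer `R_{n,λ}`: output the input bit with
probability `1 - λ/n` and a uniformly random bit with probability `λ/n`. -/
noncomputable def rr (n : ℕ) (lam : ℝ) (x : Bool) : PMF Bool :=
  (PMF.bernoulli (min (ENNReal.ofReal (lam / n)) 1).toNNReal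
      (by simpa using ENNReal.toNNReal_mono ENNReal.one_ne_top (min_le_right _ _))).bind fun b =>
    if b then PMF.bernoulli 2⁻¹ (by norm_num) else PMF.pure x

/-- Binomial distribution, valued in `ℕ`. -/
noncomputable def binom (p : ℝ≥0∞) (h : p ≤ 1) (m : ℕ) : PMF ℕ :=
  (PMF.binomial p.toNNReal (by simpa using ENNReal.toNNReal_mono ENNReal.one_ne_top h) m).map Fin.val

/-- Uniform distribution over the subsets of `Fin n` of size `s`. -/
noncomputable def uniformSubset (n s : ℕ) : PMF (Finset (Fin n)) :=
  if h : ((Finset.univ : Finset (Fin n)).powersetCard s).Nonempty then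
    PMF.uniformOfFinset _ h
  else PMF.pure ∅

/-- `∑_{i ∉ H} x_i` for a boolean dataset `x`. -/
def sumOutside {n : ℕ} (H : Finset (Fin n)) (x : Fin n → Bool) : ℕ :=
  ∑ i ∈ Hᶜ, (if x i then 1 else 0)

/-- The mechanism `C_H`: output `∑_{i ∉ H} x_i + B` with `B ~ Bin(|H|, 1/2)`. -/
noncomputable def CH (n : ℕ) (H : Finset (Fin n)) (x : Fin n → Bool) : PMF ℕ :=
  (binom 2⁻¹ half_le_one H.card).map fun B => sumOutside H x + B

/-- The mechanism `C_s`: sample `H` uniformly among size-`s` subsets, then run `C_H`. -/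
noncomputable def Cs (n s : ℕ) (x : Fin n → Bool) : PMF ℕ :=
  (uniformSubset n s).bind fun H => CH n H x

/-- The mechanism `C_λ`: sample `s ~ Bin(n, λ/n)`, then run `C_s`. -/
noncomputable def Cmech (n : ℕ) (lam : ℝ) (x : Fin n → Bool) : PMF ℕ :=
  (binom (min (ENNReal.ofReal (lam / n)) 1) (min_le_right _ _) n).bind fun s => Cs n s x

/-- The shuffled bit-sum mechanism `Π_{n,λ}`: the random multiset `{y_1, …, y_n}`
of the outputs `y_i ~ R_{n,λ}(x_i)`. -/
noncomputable def shuffleBit (n : ℕ) (lam : ℝ) (x : Fin n → Bool) : PMF (Multiset Bool) :=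
  (indep n fun i => rr n lam (x i)).map fun l => (l : Multiset Bool)

/-- The bit-sum protocol output `P_{n,λ}(x) = (n/(n-λ)) (∑ y_i - λ/2)`. -/
noncomputable def bitSumOutput (n : ℕ) (lam : ℝ) (x : Fin n → Bool) : PMF ℝ :=
  (indep n fun i => rr n lam (x i)).map fun l =>
    ((n : ℝ) / (n - lam)) * ((l.count true : ℝ) - lam / 2)

/-- The randomized-rounding encoder `E_r`. -/
noncomputable def encoder (r : ℕ) (x : ℝ) : PMF (Fin r → Bool) :=
  (PMF.bernoulli (min (ENNReal.ofReal (x * r - ⌈x * r⌉ + 1)) 1).toNNReal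
      (by simpa using ENNReal.toNNReal_mono ENNReal.one_ne_top (min_le_right _ _))).map
    fun b i => if ((i : ℕ) : ℤ) + 1 < ⌈x * r⌉ then true
      else if ((i : ℕ) : ℤ) + 1 = ⌈x * r⌉ then b else false

/-- The real-sum shuffled mechanism `Π^ℝ_{n,λ,r}`: the random multiset of all `n·r`
bits `y_{i,j} ~ R_{n,λ}(b_{i,j})` where `(b_{i,1},…,b_{i,r}) = E_r(x_i)`. -/
noncomputable def realShuffle (n : ℕ) (lam : ℝ) (r : ℕ) (X : Fin n → ℝ) :
    PMF (Multiset Bool) :=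
  (indep n fun i =>
      (encoder r (X i)).bind fun b =>
        (indep r fun j => rr n lam (b j)).map fun l => (l : Multiset Bool)).map
    fun ms => ms.sum

/-- The real-sum protocol output `z = (1/r)(n/(n-λ)) (∑_{i,j} y_{i,j} - λ r/2)`. -/
noncomputable def realOutput (n : ℕ) (lam : ℝ) (r : ℕ) (X : Fin n → ℝ) : PMF ℝ :=
  (realShuffle n lam r X).map fun m =>
    (1 / (r : ℝ)) * ((n : ℝ) / (n - lam)) * ((m.count true : ℝ) - lam * r / 2)

/-- The shuffled mechanism associated with a randomizer producing a multiset of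
messages: the union (multiset sum) of the `n` users' message multisets. -/
noncomputable def shuffM {𝒳 : Type u} {𝒴 : Type v} (n : ℕ) (R : 𝒳 → PMF (Multiset 𝒴))
    (x : Fin n → 𝒳) : PMF (Multiset 𝒴) :=
  (indep n fun i => R (x i)).map fun l => l.sum

/-- The multiset of the `m` messages output by an `m`-message randomizer. -/
noncomputable def vecR {𝒳 : Type u} {𝒴 : Type v} {m : ℕ} (R : 𝒳 → PMF (Fin m → 𝒴)) :
    𝒳 → PMF (Multiset 𝒴) :=
  fun a => (R a).map fun v => ((List.ofFn v : List 𝒴) : Multiset 𝒴)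

/-- The one-message shuffled mechanism `Π_R`: the random multiset `{R(x_1), …, R(x_n)}`. -/
noncomputable def shuffle1 {𝒳 : Type u} {𝒴 : Type v} (n : ℕ) (R : 𝒳 → PMF 𝒴)
    (x : Fin n → 𝒳) : PMF (Multiset 𝒴) :=
  (indep n fun i => R (x i)).map fun l => (l : Multiset 𝒴)

/-- `(ε, δ)`-differential privacy of a local randomizer (any two inputs are neighbors). -/
def RandDP {𝒳 : Type u} {𝒴 : Type v} (R : 𝒳 → PMF 𝒴) (ε δ : ℝ) : Prop :=
  ∀ x x' : 𝒳, ∀ T : Set 𝒴,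
    (R x).toOuterMeasure T ≤
      ENNReal.ofReal (Real.exp ε) * (R x').toOuterMeasure T + ENNReal.ofReal δ

/-- The output of the local protocol `(R, A)`. -/
noncomputable def localOut {𝒳 : Type u} {𝒴 : Type v} {𝒵 : Type w} (n : ℕ)
    (R : 𝒳 → PMF 𝒴) (A : List 𝒴 → 𝒵) (X : Fin n → 𝒳) : PMF 𝒵 :=
  (indep n fun i => R (X i)).map A

/-- `(a, b)`-accuracy of a protocol `P` for a function `f` w.r.t. a distance `d`. -/
def AccFor {I : Type u} {𝒵 : Type w} (P : I → PMF 𝒵) (f : I → 𝒵) (d : 𝒵 → 𝒵 → ℝ)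
    (a b : ℝ) : Prop :=
  ∀ X, ENNReal.ofReal (1 - b) ≤ (P X).toOuterMeasure {z | d z (f X) ≤ a}

/-! `C_H(x)` is `s + B` with `s = ∑_{i ∉ H} x_i` and `B ~ Bin(|H|, 1/2)`, and neighbouring
inputs move `s` by at most one. Within `u = √(|H| log(2/δ) / 2)` of `|H| / 2`, consecutive
binomial weights have ratio at most `1 + √(32 log(4/δ) / |H|)`, and by the Chernoff–Hoeffding
bound each of the two tails beyond that window has mass at most `exp (-2 u² / |H|) = δ / 2`. -/

open Finset Real

def binomWeight (m k : ℕ) : ℝ := m.choose k / 2 ^ m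

lemma binomWeight_nonneg (m k : ℕ) : 0 ≤ binomWeight m k := by
  unfold binomWeight; positivity

lemma binomWeight_succ_mul (m k : ℕ) :
    binomWeight m (k + 1) * (k + 1) = binomWeight m k * (m - k) := by
  rcases le_or_gt k m with hkm | hmk
  · have h := congrArg (Nat.cast (R := ℝ)) (Nat.choose_succ_right_eq m k)
    push_cast [hkm] at h
    unfold binomWeight
    rw [div_mul_eq_mul_div, h, div_mul_eq_mul_div]
  · simp [binomWeight, Nat.choose_eq_zero_of_lt hmk,
      Nat.choose_eq_zero_of_lt (hmk.trans k.lt_succ_self)]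

lemma binomWeight_le_mul_succ {m k : ℕ} {K : ℝ} (h : (k + 1 : ℝ) ≤ K * (m - k)) :
    binomWeight m k ≤ K * binomWeight m (k + 1) := by
  refine le_of_mul_le_mul_right ?_ (by positivity : (0 : ℝ) < k + 1)
  calc binomWeight m k * (k + 1) ≤ binomWeight m k * (K * (m - k)) :=
        mul_le_mul_of_nonneg_left h (binomWeight_nonneg m k)
    _ = K * binomWeight m (k + 1) * (k + 1) := by rw [mul_assoc, binomWeight_succ_mul]; ring

lemma binomWeight_succ_le_mul {m k : ℕ} {K : ℝ} (h : (m - k : ℝ) ≤ K * (k + 1)) :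
    binomWeight m (k + 1) ≤ K * binomWeight m k := by
  refine le_of_mul_le_mul_right ?_ (by positivity : (0 : ℝ) < k + 1)
  calc binomWeight m (k + 1) * (k + 1) = binomWeight m k * (m - k) := binomWeight_succ_mul m k
    _ ≤ binomWeight m k * (K * (k + 1)) := mul_le_mul_of_nonneg_left h (binomWeight_nonneg m k)
    _ = K * binomWeight m k * (k + 1) := by ring

lemma sum_binomWeight_mul_exp (m : ℕ) (l : ℝ) :
    ∑ k ∈ range (m + 1), binomWeight m k * exp (l * k) = ((exp l + 1) / 2) ^ m := by
  rw [div_pow, add_pow, sum_div]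
  refine sum_congr rfl fun k _ => ?_
  rw [binomWeight, mul_comm l, exp_nat_mul, one_pow]
  ring

lemma exp_add_one_div_two_le (l : ℝ) : (exp l + 1) / 2 ≤ exp (l / 2 + l ^ 2 / 8) := by
  have hcosh : (exp l + 1) / 2 = exp (l / 2) * cosh (l / 2) := by
    rw [cosh_eq, mul_div_assoc', mul_add, ← exp_add, ← exp_add, add_halves, add_neg_cancel,
      exp_zero]
  rw [hcosh, exp_add]
  gcongr
  calc cosh (l / 2) ≤ exp ((l / 2) ^ 2 / 2) := cosh_le_exp_half_sq _
    _ = exp (l ^ 2 / 8) := by ring_nf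

lemma sum_ite_binomWeight_le (m : ℕ) (P : ℕ → Prop) {l a : ℝ}
    (hP : ∀ k, P k → 0 ≤ l * (k - a)) :
    ∑ k ∈ range (m + 1), (if P k then binomWeight m k else 0)
      ≤ exp (l * (m / 2 - a) + m * l ^ 2 / 8) := by
  calc ∑ k ∈ range (m + 1), (if P k then binomWeight m k else 0)
      ≤ ∑ k ∈ range (m + 1), binomWeight m k * exp (l * k) * exp (-(l * a)) := by
        refine sum_le_sum fun k _ => ?_
        rw [mul_assoc, ← exp_add, ← sub_eq_add_neg, ← mul_sub]
        split_ifs with hk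
        · exact le_mul_of_one_le_right (binomWeight_nonneg m k) (one_le_exp (hP k hk))
        · exact mul_nonneg (binomWeight_nonneg m k) (exp_nonneg _)
    _ = ((exp l + 1) / 2) ^ m * exp (-(l * a)) := by
        rw [← sum_mul, sum_binomWeight_mul_exp]
    _ ≤ exp (l / 2 + l ^ 2 / 8) ^ m * exp (-(l * a)) := by
        gcongr
        exact exp_add_one_div_two_le l
    _ = exp (l * (m / 2 - a) + m * l ^ 2 / 8) := by
        rw [← exp_nat_mul, ← exp_add]
        ring_nf

lemma sum_binomWeight_upper_tail_le (m : ℕ) {u : ℝ} (hu : 0 ≤ u) :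
    ∑ k ∈ range (m + 1), (if (m / 2 + u : ℝ) < k then binomWeight m k else 0)
      ≤ exp (-2 * u ^ 2 / m) := by
  convert sum_ite_binomWeight_le m (fun k : ℕ => (m / 2 + u : ℝ) < k)
    (l := 4 * u / m) (a := m / 2 + u) fun k hk => ?_ using 2
  · rcases eq_or_ne (m : ℝ) 0 with hm | hm
    · simp [hm]
    · field_simp; ring
  · exact mul_nonneg (by positivity) (by linarith [show (m / 2 + u : ℝ) < k from hk])

lemma sum_binomWeight_lower_tail_le (m : ℕ) {u : ℝ} (hu : 0 ≤ u) :
    ∑ k ∈ range (m + 1), (if (k : ℝ) < m / 2 - u then binomWeight m k else 0)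
      ≤ exp (-2 * u ^ 2 / m) := by
  convert sum_ite_binomWeight_le m (fun k : ℕ => (k : ℝ) < m / 2 - u)
    (l := -(4 * u / m)) (a := m / 2 - u) fun k hk => ?_ using 2
  · rcases eq_or_ne (m : ℝ) 0 with hm | hm
    · simp [hm]
    · field_simp; ring
  · exact mul_nonneg_of_nonpos_of_nonpos (by simp only [neg_nonpos]; positivity)
      (by linarith [show (k : ℝ) < m / 2 - u from hk])

lemma sum_range_le_of_le_mul_succ {N : ℕ} {f g t : ℕ → ℝ} {K : ℝ} (hK : 0 ≤ K)
    (hg : ∀ k, 0 ≤ g k) (hgN : g (N + 1) = 0)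
    (h : ∀ k ∈ range (N + 1), f k ≤ K * g (k + 1) + t k) :
    ∑ k ∈ range (N + 1), f k ≤ K * ∑ k ∈ range (N + 1), g k + ∑ k ∈ range (N + 1), t k := by
  have hshift : ∑ k ∈ range (N + 1), g (k + 1) ≤ ∑ k ∈ range (N + 1), g k := by
    have := sum_range_succ' g (N + 1)
    rw [sum_range_succ, hgN] at this
    linarith [hg 0]
  calc ∑ k ∈ range (N + 1), f k ≤ ∑ k ∈ range (N + 1), (K * g (k + 1) + t k) := sum_le_sum h
    _ ≤ _ := by rw [sum_add_distrib, ← mul_sum]; gcongr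

lemma sum_range_le_of_succ_le_mul {N : ℕ} {f g t : ℕ → ℝ} {K : ℝ} (hK : 0 ≤ K)
    (hg : ∀ k, 0 ≤ g k) (h0 : f 0 ≤ t 0)
    (h : ∀ k ∈ range N, f (k + 1) ≤ K * g k + t (k + 1)) :
    ∑ k ∈ range (N + 1), f k ≤ K * ∑ k ∈ range (N + 1), g k + ∑ k ∈ range (N + 1), t k := by
  have hshift : ∑ k ∈ range N, g k ≤ ∑ k ∈ range (N + 1), g k := by
    rw [sum_range_succ]; linarith [hg N]
  rw [sum_range_succ' f, sum_range_succ' t]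
  calc ∑ k ∈ range N, f (k + 1) + f 0 ≤ ∑ k ∈ range N, (K * g k + t (k + 1)) + t 0 :=
        add_le_add (sum_le_sum h) h0
    _ ≤ _ := by rw [sum_add_distrib, ← mul_sum, add_assoc]; gcongr

/-- `Pr[s + B ∈ W]` for `B ~ Bin(m, 1/2)`. -/
def binomShiftProb (m s : ℕ) (W : Set ℕ) : ℝ :=
  ∑ k ∈ range (m + 1), if s + k ∈ W then binomWeight m k else 0

lemma binomShiftProb_nonneg (m s : ℕ) (W : Set ℕ) : 0 ≤ binomShiftProb m s W :=
  sum_nonneg fun k _ => ite_nonneg (binomWeight_nonneg m k) le_rfl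

section Shift

variable {m : ℕ} {K u : ℝ} (hK0 : 0 ≤ K) (hK : m / 2 + u + 1 ≤ K * (m / 2 - u))
include hK0 hK

lemma binomShiftProb_succ_le (s : ℕ) (W : Set ℕ) :
    binomShiftProb m (s + 1) W ≤ K * binomShiftProb m s W +
      ∑ k ∈ range (m + 1), (if (m / 2 + u : ℝ) < k then binomWeight m k else 0) := by
  refine sum_range_le_of_le_mul_succ hK0 (fun k => ite_nonneg (binomWeight_nonneg m k) le_rfl)
    (by simp [binomWeight]) fun k _ => ?_
  rw [show s + (k + 1) = s + 1 + k by omega]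
  by_cases hk : (k : ℝ) ≤ m / 2 + u
  · have hratio : binomWeight m k ≤ K * binomWeight m (k + 1) :=
      binomWeight_le_mul_succ (by nlinarith)
    rw [if_neg (not_lt.2 hk), add_zero]
    split_ifs
    exacts [hratio, by simp]
  · rw [if_pos (lt_of_not_ge hk)]
    have hf : (if s + 1 + k ∈ W then binomWeight m k else 0) ≤ binomWeight m k := by
      split_ifs <;> simp [binomWeight_nonneg]
    have hg : 0 ≤ K * if s + 1 + k ∈ W then binomWeight m (k + 1) else 0 :=
      mul_nonneg hK0 (ite_nonneg (binomWeight_nonneg m _) le_rfl)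
    linarith

lemma binomShiftProb_le_succ (hu : 0 ≤ u) (s : ℕ) (W : Set ℕ) :
    binomShiftProb m s W ≤ K * binomShiftProb m (s + 1) W +
      ∑ k ∈ range (m + 1), (if (k : ℝ) < m / 2 - u then binomWeight m k else 0) := by
  have hpos : 0 < (m / 2 - u : ℝ) := by
    by_contra! h
    linarith [mul_nonpos_of_nonneg_of_nonpos hK0 h, (Nat.cast_nonneg m : (0 : ℝ) ≤ m)]
  refine sum_range_le_of_succ_le_mul hK0 (fun k => ite_nonneg (binomWeight_nonneg m k) le_rfl)
    ?_ fun k _ => ?_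
  · rw [Nat.cast_zero, if_pos hpos]
    split_ifs <;> simp [binomWeight_nonneg]
  rw [show s + (k + 1) = s + 1 + k by omega]
  by_cases hk : (m / 2 - u : ℝ) ≤ k + 1
  · have hratio : binomWeight m (k + 1) ≤ K * binomWeight m k :=
      binomWeight_succ_le_mul (by nlinarith)
    rw [if_neg (show ¬((k + 1 : ℕ) : ℝ) < m / 2 - u by push_cast; linarith), add_zero]
    split_ifs
    exacts [hratio, by simp]
  · rw [if_pos (show ((k + 1 : ℕ) : ℝ) < m / 2 - u by push_cast; linarith)]
    have hf : (if s + 1 + k ∈ W then binomWeight m (k + 1) else 0) ≤ binomWeight m (k + 1) := by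
      split_ifs <;> simp [binomWeight_nonneg]
    have hg : 0 ≤ K * if s + 1 + k ∈ W then binomWeight m k else 0 :=
      mul_nonneg hK0 (ite_nonneg (binomWeight_nonneg m _) le_rfl)
    linarith

end Shift

lemma half_add_sqrt_add_one_le {m del : ℝ} (h0 : 0 < del) (h2 : del ≤ 2)
    (hm : 8 * log (4 / del) < m) :
    m / 2 + √(m * log (2 / del) / 2) + 1
      ≤ (1 + √(32 * log (4 / del) / m)) * (m / 2 - √(m * log (2 / del) / 2)) := by
  have hLL₂ : log (4 / del) = log (2 / del) + log 2 := by
    rw [← log_mul (by positivity) two_ne_zero, div_mul_eq_mul_div]; norm_num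
  set L := log (4 / del)
  set L₂ := log (2 / del)
  have hL₂ : 0 ≤ L₂ := log_nonneg (by rw [le_div_iff₀ h0]; linarith)
  have hlog2 : 1 / 2 < log 2 := by linarith [log_two_gt_d9]
  have hL : 0 < L := by linarith
  have hm0 : 0 < m := by linarith
  set c := √(32 * L / m)
  set u := √(m * L₂ / 2)
  have hc : c ^ 2 = 32 * L / m := sq_sqrt (by positivity)
  have hu : u ^ 2 = m * L₂ / 2 := sq_sqrt (by positivity)
  have hc0 : 0 ≤ c := sqrt_nonneg _
  have hu0 : 0 ≤ u := sqrt_nonneg _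
  /- With `a = c m / 4` and `b = 2 u`, the goal is `b + 1 + c u ≤ 2 a`. Here `c u ≤ 4 L < a`,
  and `a - b ≥ 1` because `(a - b) (a + b) = a² - b² = 2 m log 2 ≥ 2 a`. -/
  have ha : (c * m / 4) ^ 2 = 2 * L * m := by
    rw [mul_div_assoc, mul_pow, hc]; field_simp; ring
  have hcu : c * u ≤ 4 * L := by
    have : (c * u) ^ 2 ≤ (4 * L) ^ 2 := by rw [mul_pow, hc, hu]; field_simp; nlinarith
    nlinarith
  have ha4L : 4 * L < c * m / 4 := by
    have : (4 * L) ^ 2 < (c * m / 4) ^ 2 := by rw [ha]; nlinarith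
    exact lt_of_pow_lt_pow_left₀ 2 (by positivity) this
  have hab : 1 ≤ c * m / 4 - 2 * u := by
    have hba : 2 * u ≤ c * m / 4 := by nlinarith
    have hma : c * m / 4 ≤ m * log 2 := by nlinarith
    nlinarith
  nlinarith

lemma binomShiftProb_le_of_adjacent {m : ℕ} {del : ℝ} (h0 : 0 < del) (h2 : del ≤ 2)
    (hm : 8 * log (4 / del) < m) {s s' : ℕ} (hss : s = s' ∨ s = s' + 1 ∨ s' = s + 1)
    (W : Set ℕ) :
    binomShiftProb m s W
      ≤ (1 + √(32 * log (4 / del) / m)) * binomShiftProb m s' W + del / 2 := by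
  have hK := half_add_sqrt_add_one_le h0 h2 hm
  have hK0 : 0 ≤ 1 + √(32 * log (4 / del) / m) := by positivity
  have hu0 : 0 ≤ √(m * log (2 / del) / 2) := sqrt_nonneg _
  have hm0 : (0 : ℝ) < m := by
    have : 0 < log (4 / del) := log_pos (by rw [lt_div_iff₀ h0]; linarith)
    linarith
  have hL₂ : 0 ≤ log (2 / del) := log_nonneg (by rw [le_div_iff₀ h0]; linarith)
  have htail : exp (-2 * √(m * log (2 / del) / 2) ^ 2 / m) = del / 2 := by
    rw [sq_sqrt (by positivity), show -2 * (m * log (2 / del) / 2) / m = -log (2 / del) by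
      field_simp, exp_neg, exp_log (by positivity), inv_div]
  rcases hss with rfl | rfl | rfl
  · nlinarith [binomShiftProb_nonneg m s W, sqrt_nonneg (32 * log (4 / del) / m)]
  · linarith [binomShiftProb_succ_le hK0 hK s' W, sum_binomWeight_upper_tail_le m hu0]
  · linarith [binomShiftProb_le_succ hK0 hK hu0 s W, sum_binomWeight_lower_tail_le m hu0]

lemma binomial_half_apply (m : ℕ) (h : (2⁻¹ : ℝ≥0∞).toNNReal ≤ 1) (i : Fin (m + 1)) :
    PMF.binomial (2⁻¹ : ℝ≥0∞).toNNReal h m i = ENNReal.ofReal (binomWeight m i) := by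
  have hp : (((2⁻¹ : ℝ≥0∞).toNNReal : NNReal) : ℝ≥0∞) = 2⁻¹ := ENNReal.coe_toNNReal (by simp)
  rw [PMF.binomial_apply, hp, ENNReal.one_sub_inv_two, Fin.val_last, ← pow_add,
    Nat.add_sub_cancel' (Fin.is_le i), binomWeight, ENNReal.ofReal_div_of_pos (by positivity),
    ENNReal.ofReal_natCast, ENNReal.ofReal_pow zero_le_two, ENNReal.ofReal_ofNat, mul_comm,
    div_eq_mul_inv, ENNReal.inv_pow]

lemma CH_toOuterMeasure_apply (n : ℕ) (H : Finset (Fin n)) (x : Fin n → Bool) (W : Set ℕ) :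
    (CH n H x).toOuterMeasure W = ENNReal.ofReal (binomShiftProb H.card (sumOutside H x) W) := by
  rw [CH, binom, PMF.toOuterMeasure_map_apply, PMF.toOuterMeasure_map_apply,
    PMF.toOuterMeasure_apply, tsum_fintype, binomShiftProb,
    ENNReal.ofReal_sum_of_nonneg fun k _ => ite_nonneg (binomWeight_nonneg _ k) le_rfl,
    ← Fin.sum_univ_eq_sum_range]
  refine sum_congr rfl fun i _ => ?_
  rw [Set.indicator_apply, apply_ite ENNReal.ofReal, ENNReal.ofReal_zero]
  exact if_congr Iff.rfl (binomial_half_apply _ _ i) rfl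

lemma sumOutside_eq_or_succ_of_neighbor {n : ℕ} (H : Finset (Fin n)) {x x' : Fin n → Bool}
    (hN : Neighbor x x') :
    sumOutside H x = sumOutside H x' ∨ sumOutside H x = sumOutside H x' + 1 ∨
      sumOutside H x' = sumOutside H x + 1 := by
  obtain ⟨j, hj⟩ := hN
  by_cases hjH : j ∈ Hᶜ
  · rw [sumOutside, sumOutside, ← add_sum_erase _ _ hjH, ← add_sum_erase _ _ hjH,
      sum_congr rfl fun i hi => by rw [hj i (ne_of_mem_erase hi)]]
    cases x j <;> cases x' j <;> simp <;> omega
  · exact Or.inl <| sum_congr rfl fun i hi => by rw [hj i (by rintro rfl; exact hjH hi)]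

/-- for `H ⊆ [n]` with `|H| > 8 ln(4/δ)`, the mechanism `C_H` is
`(ln(1 + √(32 ln(4/δ)/|H|)), δ/2)`-DP. -/
theorem stmt3 (n : ℕ) (del : ℝ) (hdel : del ∈ Set.Ioo (0 : ℝ) 1) (H : Finset (Fin n))
    (hH : 8 * Real.log (4 / del) < (H.card : ℝ)) :
    ∀ x x' : Fin n → Bool, Neighbor x x' → ∀ W : Set ℕ,
      (CH n H x).toOuterMeasure W ≤
        ENNReal.ofReal (1 + Real.sqrt (32 * Real.log (4 / del) / H.card)) *
          (CH n H x').toOuterMeasure W + ENNReal.ofReal (del / 2) := by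
  intro x x' hN W
  have hprob := binomShiftProb_le_of_adjacent hdel.1 (by linarith [hdel.2]) hH
    (sumOutside_eq_or_succ_of_neighbor H hN) W
  rw [CH_toOuterMeasure_apply, CH_toOuterMeasure_apply, ← ENNReal.ofReal_mul (by positivity),
    ← ENNReal.ofReal_add (mul_nonneg (by positivity) (binomShiftProb_nonneg _ _ _))
      (by linarith [hdel.1])]
  exact ENNReal.ofReal_le_ofReal hprob

end ShuffledDP
end
end

section
/- For every n ∈ ℕ, every β ∈ (0,1), every λ with 2·ln(2/β) ≤ λ < n, and every x ∈ {0,1}^n, the bit-sum protocol output satisfies Pr[ |P_{n,λ}(x) − ∑_{i=1}^n x_i| > √(2λ·ln(2/β)) · n/(n−λ) ] ≤ β. -/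
open scoped ENNReal Classical

noncomputable section

/-!
Each output bit of `rr n lam` differs from its input with probability `q = λ/(2n)`, so the
number `C` of ones is a sum of independent Bernoulli variables with mean
`μ = λ/2 + (1 - λ/n) ∑ xᵢ`, and `P_{n,λ}(x) - ∑ xᵢ = n/(n-λ) · (C - μ)`. For `|u| ≤ 1`, a
Bernoulli variable of mean `q` or `1 - q` has moment generating function at most
`exp (u · mean + q u²)`, so `E exp (u (C - μ)) ≤ exp (λ u² / 2)`. The exponential Markov
inequality with `u = ±t/λ` gives `Pr[|C - μ| > t] ≤ 2 exp (-t²/(2λ))` for `0 < t ≤ λ`, and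
`t = √(2λ ln(2/β))` turns the right-hand side into `β`.
-/

open Real

namespace PMF

variable {α β : Type*}

lemma tsum_bind_mul (p : PMF α) (q : α → PMF β) (F : β → ℝ≥0∞) :
    ∑' b, p.bind q b * F b = ∑' a, p a * ∑' b, q a b * F b := by
  simp only [bind_apply, ← ENNReal.tsum_mul_right, ← ENNReal.tsum_mul_left, mul_assoc]
  exact ENNReal.tsum_comm

lemma tsum_pure_mul (a : α) (F : α → ℝ≥0∞) : ∑' b, pure a b * F b = F a := by
  rw [tsum_eq_single a] <;> simp +contextual [pure_apply, eq_comm]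

lemma toOuterMeasure_setOf_lt_le (p : PMF α) (c : α → ℝ) (a : ℝ) :
    p.toOuterMeasure {x | a < c x} ≤
      ENNReal.ofReal (exp (-a)) * ∑' x, p x * ENNReal.ofReal (exp (c x)) := by
  rw [toOuterMeasure_apply, ← ENNReal.tsum_mul_left]
  refine ENNReal.tsum_le_tsum fun x => ?_
  by_cases hx : a < c x
  · have : 1 ≤ ENNReal.ofReal (exp (-a)) * ENNReal.ofReal (exp (c x)) := by
      rw [← ENNReal.ofReal_mul (exp_pos _).le, ← exp_add, ENNReal.one_le_ofReal,
        one_le_exp_iff]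
      linarith
    calc Set.indicator {x | a < c x} p x = p x * 1 := by simp [hx]
      _ ≤ _ := by rw [mul_left_comm]; exact mul_le_mul_right this _
  · simp [hx]

end PMF

namespace ShuffledDP

lemma tsum_indep_mul_prod {α : Type*} (n : ℕ) (f : Fin n → PMF α) (g : α → ℝ≥0∞) :
    ∑' l, indep n f l * (l.map g).prod = ∏ i, ∑' a, f i a * g a := by
  induction n with
  | zero => simp [indep]
  | succ n ih =>
    simp only [indep, PMF.tsum_bind_mul, PMF.tsum_pure_mul, List.map_cons, List.prod_cons,
      mul_left_comm _ (g _), ENNReal.tsum_mul_left, ih, Fin.prod_univ_succ]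
    rw [← ENNReal.tsum_mul_right]
    exact tsum_congr fun a => by ring

lemma ofReal_exp_mul_count (u : ℝ) (l : List Bool) :
    ENNReal.ofReal (exp (u * l.count true)) =
      (l.map fun y => ENNReal.ofReal (exp (u * if y then 1 else 0))).prod := by
  induction l with
  | nil => simp
  | cons y l ih =>
    rw [List.map_cons, List.prod_cons, ← ih, ← ENNReal.ofReal_mul (exp_pos _).le, ← exp_add,
      List.count_cons]
    cases y <;> simp [mul_add, add_comm]

lemma bernoulli_mgf_le {q u : ℝ} (hq : 0 ≤ q) (hu : |u| ≤ 1) :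
    q * exp u + (1 - q) ≤ exp (q * u + q * u ^ 2) := by
  have hexp : exp u - 1 ≤ u + u ^ 2 := by
    linarith [(abs_le.1 (abs_exp_sub_one_sub_id_le hu)).2]
  calc q * exp u + (1 - q) = q * (exp u - 1) + 1 := by ring
    _ ≤ exp (q * (exp u - 1)) := add_one_le_exp _
    _ ≤ exp (q * u + q * u ^ 2) := by gcongr; nlinarith

lemma bernoulli_one_sub_mgf_le {q u : ℝ} (hq : 0 ≤ q) (hu : |u| ≤ 1) :
    (1 - q) * exp u + q ≤ exp ((1 - q) * u + q * u ^ 2) := by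
  have := bernoulli_mgf_le hq (u := -u) (by rwa [abs_neg])
  calc (1 - q) * exp u + q = exp u * (q * exp (-u) + (1 - q)) := by
        rw [exp_neg]; field_simp; ring
    _ ≤ exp u * exp (q * -u + q * (-u) ^ 2) := by gcongr
    _ = exp ((1 - q) * u + q * u ^ 2) := by rw [← exp_add]; ring_nf

variable {n : ℕ} {lam : ℝ}

lemma rr_apply (h0 : 0 ≤ lam) (hn : lam ≤ n) (b y : Bool) :
    rr n lam b y = ENNReal.ofReal (if y = b then 1 - lam / (2 * n) else lam / (2 * n)) := by
  have hr0 : 0 ≤ lam / n := by positivity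
  have hr1 : lam / n ≤ 1 := div_le_one_of_le₀ hn (Nat.cast_nonneg n)
  have hmin : min (ENNReal.ofReal (lam / n)) 1 = ENNReal.ofReal (lam / n) :=
    min_eq_left (ENNReal.ofReal_le_one.2 hr1)
  simp only [rr, hmin, PMF.bind_apply, tsum_bool, PMF.bernoulli_apply, cond_true, cond_false,
    Bool.false_eq_true, if_false, if_true]
  have hhalf : ((bif y then 2⁻¹ else 1 - 2⁻¹ : NNReal) : ℝ≥0∞) = ENNReal.ofReal 2⁻¹ := by
    rw [ENNReal.ofReal_inv_of_pos two_pos]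
    cases y <;> simp [ENNReal.coe_sub, ENNReal.one_sub_inv_two]
  rw [ENNReal.coe_sub, ENNReal.coe_toNNReal ENNReal.ofReal_ne_top, ENNReal.coe_one,
    ← ENNReal.ofReal_one, ← ENNReal.ofReal_sub _ hr0, hhalf, ← ENNReal.ofReal_mul hr0,
    PMF.pure_apply]
  split_ifs
  · rw [mul_one, ← ENNReal.ofReal_add (by linarith) (by positivity)]
    congr 1
    ring
  · rw [mul_zero, zero_add]
    congr 1
    ring

lemma tsum_rr_mul_exp_le (h0 : 0 ≤ lam) (hn : lam ≤ n) {u : ℝ} (hu : |u| ≤ 1) (b : Bool) :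
    ∑' y, rr n lam b y * ENNReal.ofReal (exp (u * if y then 1 else 0)) ≤
      ENNReal.ofReal (exp (u * (lam / (2 * n) + (1 - lam / n) * if b then 1 else 0) +
        lam / (2 * n) * u ^ 2)) := by
  have hr1 : lam / n ≤ 1 := div_le_one_of_le₀ hn (Nat.cast_nonneg n)
  have hq0 : 0 ≤ lam / (2 * n) := by positivity
  have hq1 : lam / (2 * n) ≤ 1 := by
    rw [mul_comm, ← div_div]; linarith
  have hp : ∀ y, 0 ≤ if y = b then 1 - lam / (2 * n) else lam / (2 * n) := by
    intro y; split_ifs <;> linarith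
  rw [tsum_bool, rr_apply h0 hn, rr_apply h0 hn, ← ENNReal.ofReal_mul (hp _),
    ← ENNReal.ofReal_mul (hp _), ← ENNReal.ofReal_add (by positivity) (by positivity)]
  apply ENNReal.ofReal_le_ofReal
  cases b
  · simpa [add_comm, mul_comm u] using bernoulli_mgf_le hq0 hu
  · have hflip : lam / (2 * n) + (1 - lam / n) = 1 - lam / (2 * n) := by ring
    simpa [hflip, add_comm, mul_comm u] using bernoulli_one_sub_mgf_le hq0 hu

/-- The expected number of ones among the outputs of `rr n lam (x i)`, `i : Fin n`. -/
def rrCountMean (n : ℕ) (lam : ℝ) (x : Fin n → Bool) : ℝ :=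
  lam / 2 + (1 - lam / n) * ∑ i, if x i then 1 else 0

lemma tsum_indep_rr_mul_exp_count_le (h0 : 0 < lam) (hn : lam ≤ n) {u : ℝ} (hu : |u| ≤ 1)
    (x : Fin n → Bool) :
    ∑' l, indep n (fun i => rr n lam (x i)) l * ENNReal.ofReal (exp (u * l.count true)) ≤
      ENNReal.ofReal (exp (u * rrCountMean n lam x + lam * u ^ 2 / 2)) := by
  have hn0 : (n : ℝ) ≠ 0 := (h0.trans_le hn).ne'
  simp_rw [ofReal_exp_mul_count, tsum_indep_mul_prod]
  calc _ ≤ ∏ i, ENNReal.ofReal (exp (u * (lam / (2 * n) + (1 - lam / n) *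
          (if x i then 1 else 0)) + lam / (2 * n) * u ^ 2)) :=
        Finset.prod_le_prod' fun i _ => tsum_rr_mul_exp_le h0.le hn hu (x i)
    _ = _ := by
      rw [← ENNReal.ofReal_prod_of_nonneg fun i _ => (exp_pos _).le, ← exp_sum]
      simp only [Finset.sum_add_distrib, ← Finset.mul_sum, Finset.sum_const, Finset.card_univ,
        Fintype.card_fin, nsmul_eq_mul, rrCountMean]
      field_simp

lemma mul_sub_half_sub_sum_eq (h0 : 0 < lam) (hn : lam < n) (x : Fin n → Bool) (c : ℝ) :
    (n : ℝ) / (n - lam) * (c - lam / 2) - ∑ i, (if x i then 1 else 0) =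
      (n : ℝ) / (n - lam) * (c - rrCountMean n lam x) := by
  have : (n : ℝ) - lam ≠ 0 := (sub_pos.2 hn).ne'
  have : (n : ℝ) ≠ 0 := (h0.trans hn).ne'
  simp only [rrCountMean]
  field_simp
  ring

lemma indep_rr_count_tail_le (h0 : 0 < lam) (hn : lam ≤ n) {u : ℝ} (hu : |u| ≤ 1) (a : ℝ)
    (x : Fin n → Bool) :
    (indep n fun i => rr n lam (x i)).toOuterMeasure
        {l | a < u * (l.count true - rrCountMean n lam x)} ≤
      ENNReal.ofReal (exp (lam * u ^ 2 / 2 - a)) := by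
  set μ := rrCountMean n lam x
  calc _ ≤ (indep n fun i => rr n lam (x i)).toOuterMeasure
        {l | a + u * μ < u * l.count true} :=
        MeasureTheory.measure_mono fun l (hl : a < u * (l.count true - μ)) =>
          show a + u * μ < u * l.count true by linarith
    _ ≤ ENNReal.ofReal (exp (-(a + u * μ))) *
        ENNReal.ofReal (exp (u * μ + lam * u ^ 2 / 2)) := by
      grw [PMF.toOuterMeasure_setOf_lt_le, tsum_indep_rr_mul_exp_count_le h0 hn hu]
    _ = _ := by rw [← ENNReal.ofReal_mul (exp_pos _).le, ← exp_add]; ring_nf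

lemma indep_rr_abs_count_sub_tail_le (hn : lam ≤ n) {t : ℝ} (ht : 0 < t) (htl : t ≤ lam)
    (x : Fin n → Bool) :
    (indep n fun i => rr n lam (x i)).toOuterMeasure
        {l | t < |l.count true - rrCountMean n lam x|} ≤
      2 * ENNReal.ofReal (exp (-(t ^ 2 / (2 * lam)))) := by
  have h0 : 0 < lam := ht.trans_le htl
  set s := t / lam
  have hs0 : 0 < s := by positivity
  have hs1 : |s| ≤ 1 := by rw [abs_of_pos hs0]; exact div_le_one_of_le₀ htl h0.le
  have hsplit : {l : List Bool | t < |l.count true - rrCountMean n lam x|} ⊆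
      {l | s * t < s * (l.count true - rrCountMean n lam x)} ∪
        {l | s * t < -s * (l.count true - rrCountMean n lam x)} := by
    intro l (hl : t < _)
    rcases lt_abs.1 hl with h | h
    · exact Or.inl (by simp only [Set.mem_ofPred_eq]; gcongr)
    · exact Or.inr (by simp only [Set.mem_ofPred_eq, neg_mul, ← mul_neg]; gcongr)
  have hexp : lam * s ^ 2 / 2 - s * t = -(t ^ 2 / (2 * lam)) := by
    simp only [s]; field_simp; ring
  calc _ ≤ _ := (MeasureTheory.measure_mono hsplit).trans (MeasureTheory.measure_union_le _ _)
    _ ≤ ENNReal.ofReal (exp (lam * s ^ 2 / 2 - s * t)) +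
        ENNReal.ofReal (exp (lam * (-s) ^ 2 / 2 - s * t)) :=
      add_le_add (indep_rr_count_tail_le h0 hn hs1 _ x)
        (indep_rr_count_tail_le h0 hn (by rwa [abs_neg]) _ x)
    _ = _ := by rw [neg_sq, hexp, ← two_mul]

/-- accuracy of the bit-sum protocol: for `2 ln(2/β) ≤ λ < n`,
`Pr[|P_{n,λ}(x) - ∑ x_i| > √(2λ ln(2/β)) · n/(n-λ)] ≤ β`. -/
theorem stmt8 (n : ℕ) (beta : ℝ) (hbeta : beta ∈ Set.Ioo (0 : ℝ) 1) (lam : ℝ)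
    (h1 : 2 * Real.log (2 / beta) ≤ lam) (h2 : lam < n) (x : Fin n → Bool) :
    (bitSumOutput n lam x).toOuterMeasure
        {z | Real.sqrt (2 * lam * Real.log (2 / beta)) * ((n : ℝ) / (n - lam)) <
          |z - ∑ i, (if x i then (1 : ℝ) else 0)|} ≤
      ENNReal.ofReal beta := by
  obtain ⟨hβ0, hβ1⟩ := hbeta
  set L := log (2 / beta)
  have hL : 0 < L := log_pos (by rw [lt_div_iff₀ hβ0]; linarith)
  have hlam : 0 < lam := by linarith
  set t := sqrt (2 * lam * L)
  have ht : 0 < t := sqrt_pos.2 (by positivity)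
  have htl : t ≤ lam := sqrt_le_iff.2 ⟨hlam.le, by nlinarith⟩
  have hκ : 0 < (n : ℝ) / (n - lam) := div_pos (hlam.trans h2) (sub_pos.2 h2)
  calc _ = (indep n fun i => rr n lam (x i)).toOuterMeasure
        {l | t < |l.count true - rrCountMean n lam x|} := by
        rw [bitSumOutput, PMF.toOuterMeasure_map_apply]
        congr 1
        ext l
        simp only [Set.mem_preimage, Set.mem_ofPred_eq, mul_sub_half_sub_sum_eq hlam h2,
          abs_mul, abs_of_pos hκ, mul_comm t, mul_lt_mul_iff_right₀ hκ]
    _ ≤ 2 * ENNReal.ofReal (exp (-(t ^ 2 / (2 * lam)))) :=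
        indep_rr_abs_count_sub_tail_le h2.le ht htl x
    _ = ENNReal.ofReal beta := by
        rw [sq_sqrt (by positivity), mul_div_cancel_left₀ _ (by positivity), exp_neg,
          exp_log (by positivity), inv_div, ← ENNReal.ofReal_ofNat 2,
          ← ENNReal.ofReal_mul zero_le_two]
        ring_nf

end ShuffledDP
end
end
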